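/- arXiv:2604.00734 — 5 statements merged into one kernel-verified Lean document; each statement's English description precedes it below -/
import Mathlib

section
/- Let G be a group acting on a type B, let K ≤ G be a subgroup of finite index n, and let α : G → Σ_n be the permutation representation of G on the left cosets G/K (after choosing a bijection G/K ≅ {1,…,n} with the trivial coset first). Equip Bⁿ with the G-action g·(b₁,…,bₙ) = (g·b_{α(g)⁻¹(1)},…,g·b_{α(g)⁻¹(n)}). Then the map sending x ∈ B^K (the K-fixed points) to (h₁·x,…,hₙ·x), where h₁=e,…,hₙ are coset representatives in the chosen order, is a bijection from B^K onto the G-fixed points (Bⁿ)^G. -/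
/-!
STATEMENT 1: Let `K ≤ G` be of index `n`, `e : G ⧸ K ≃ Fin n` with the trivial
coset first, `r : Fin n → G` coset representatives in the chosen order with
`r 0 = 1`, and `α : G →* Perm (Fin n)` the associated permutation
representation. For a `G`-action on `B`, the map `x ↦ (i ↦ r i • x)` is a
bijection from the `K`-fixed points `B^K` onto the `G`-fixed points of `Bⁿ`
with the twisted action `g·(b) i = g • b (α(g)⁻¹ i)`.
-/

theorem stmt1 {G B : Type*} [Group G] [MulAction G B] (K : Subgroup G)
    {n : ℕ} (hn : 0 < n) (e : (G ⧸ K) ≃ Fin n)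
    (he1 : e (QuotientGroup.mk (1 : G)) = ⟨0, hn⟩)
    (r : Fin n → G) (hr : ∀ i, (QuotientGroup.mk (r i) : G ⧸ K) = e.symm i)
    (hr0 : r ⟨0, hn⟩ = 1)
    (α : G →* Equiv.Perm (Fin n))
    (hα : ∀ (g : G) (i : Fin n), (e.symm (α g i) : G ⧸ K) = g • (e.symm i : G ⧸ K)) :
    Set.BijOn (fun (x : B) (i : Fin n) => r i • x)
      {x : B | ∀ k : K, (k : G) • x = x}
      {f : Fin n → B | ∀ (g : G) (i : Fin n), g • f ((α g)⁻¹ i) = f i} := by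
  have hmk : ∀ (g a : G), g • (QuotientGroup.mk a : G ⧸ K) = QuotientGroup.mk (g * a) := by
    intro g a
    rfl
  -- key: mk (r (α g j)) = mk (g * r j)
  have key : ∀ (g : G) (j : Fin n),
      (QuotientGroup.mk (r (α g j)) : G ⧸ K) = QuotientGroup.mk (g * r j) := by
    intro g j
    rw [hr, hα, ← hr, hmk]
  -- e.symm ⟨0,hn⟩ = mk 1
  have he0 : (e.symm ⟨0, hn⟩ : G ⧸ K) = QuotientGroup.mk (1 : G) := by
    rw [← he1, Equiv.symm_apply_apply]
  refine ⟨?_, ?_, ?_⟩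
  · intro x hx g
    intro i
    set j := (α g)⁻¹ i with hj
    have hji : α g j = i := by simp [hj]
    have := key g j
    rw [hji, QuotientGroup.eq] at this
    have hk : (r i)⁻¹ * (g * r j) ∈ K := this
    have : g • r j • x = r i • x := by
      have hx' := hx ⟨(r i)⁻¹ * (g * r j), hk⟩
      calc g • r j • x = (r i * ((r i)⁻¹ * (g * r j))) • x := by
            rw [smul_smul]; congr 1; group
        _ = r i • ((r i)⁻¹ * (g * r j)) • x := by rw [mul_smul]
        _ = r i • x := by rw [hx']
    simpa using this
  · intro x hx y hy h
    have := congrFun h ⟨0, hn⟩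
    simpa [hr0] using this
  · intro f hf
    set x := f ⟨0, hn⟩ with hx0
    have hαr : ∀ i : Fin n, α (r i) ⟨0, hn⟩ = i := by
      intro i
      apply e.symm.injective
      rw [hα, he0, hmk, mul_one, hr]
    refine ⟨x, ?_, ?_⟩
    · intro k
      have hfix : α (k : G) ⟨0, hn⟩ = ⟨0, hn⟩ := by
        apply e.symm.injective
        rw [hα, he0, hmk, mul_one, QuotientGroup.eq]
        simp [k.2]
      have hfix' : (α (k : G))⁻¹ ⟨0, hn⟩ = ⟨0, hn⟩ :=
        Equiv.Perm.inv_eq_iff_eq.mpr hfix.symm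
      have := hf (k : G) ⟨0, hn⟩
      rw [hfix'] at this
      exact this
    · funext i
      have := hf (r i) i
      have hinv : (α (r i))⁻¹ i = ⟨0, hn⟩ :=
        Equiv.Perm.inv_eq_iff_eq.mpr (hαr i).symm
      rw [hinv] at this
      exact this
end

section
/- Let C be a bicomplete category, α : G → H a group homomorphism, and K ≤ H a subgroup. Then for every X in C^G there is a natural isomorphism (α_! X)_K ≅ ⨿_{α(G)hK ∈ α(G)\H/K} X_{α⁻¹(hKh⁻¹)}, where (−)_K denotes the colimit over BK (the K-coinvariants/quotient) and X_{α⁻¹(hKh⁻¹)} the coinvariants for the subgroup α⁻¹(hKh⁻¹) of G. -/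
set_option synthInstance.maxHeartbeats 800000

open CategoryTheory CategoryTheory.Limits

/-!
STATEMENT 5: Let `C` be a bicomplete category, `α : G →* H` a group
homomorphism and `K ≤ H`. Writing `C^G = SingleObj G ⥤ C`, `α_!` for any left
adjoint of the restriction `α*`, and `Z_L = colim_{BL} Z` for the
`L`-coinvariants, there is an isomorphism
`(α_! X)_K ≅ ∐_{α(G)hK ∈ α(G)\H/K} X_{α⁻¹(hKh⁻¹)}`,
the coproduct running over double cosets (with representatives `d.out`).
-/

set_option maxHeartbeats 1000000

open CategoryTheory CategoryTheory.Limits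

namespace Stmt5Aux

universe v u

variable {C : Type u} [Category.{v} C]

lemma smap_mul {M : Type*} [Monoid M] (Z : SingleObj M ⥤ C) (a b : M) :
    Z.map (X := SingleObj.star M) (Y := SingleObj.star M) (a * b) =
      Z.map (X := SingleObj.star M) (Y := SingleObj.star M) b ≫
        Z.map (X := SingleObj.star M) (Y := SingleObj.star M) a :=
  Z.map_comp (X := SingleObj.star M) (Y := SingleObj.star M) (Z := SingleObj.star M) b a

lemma smap_one {M : Type*} [Monoid M] (Z : SingleObj M ⥤ C) :
    (Z.map (1 : M) : Z.obj (SingleObj.star M) ⟶ Z.obj (SingleObj.star M)) =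
      𝟙 (Z.obj (SingleObj.star M)) :=
  Z.map_id (SingleObj.star M)

lemma pi_map_π {ι : Type*} {f g : ι → C} [HasProduct f] [HasProduct g]
    (p : ∀ i, f i ⟶ g i) (i : ι) :
    Limits.Pi.map p ≫ Pi.π g i = Pi.π f i ≫ p i := by
  simpa using limMap_π (Discrete.natTrans fun X => p X.as) ⟨i⟩

/-- Lemma A: maps out of the colimit over `SingleObj M` are invariant maps. -/
noncomputable def eColim {M : Type v} [Monoid M] [HasColimitsOfSize.{v, 0} C]
    (W : SingleObj M ⥤ C) (c : C) :
    (colimit W ⟶ c) ≃ {t : W.obj (SingleObj.star M) ⟶ c // ∀ m : M, W.map m ≫ t = t} where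
  toFun f := ⟨colimit.ι W (SingleObj.star M) ≫ f, fun m => by
    rw [← Category.assoc, colimit.w]⟩
  invFun t := colimit.desc W
    { pt := c
      ι := { app := fun _ => t.1, naturality := fun _ _ m => by
              simpa using t.2 m } }
  left_inv f := by
    apply colimit.hom_ext
    rintro ⟨⟩
    simp
    rfl
  right_inv t := by
    ext
    simp

lemma eColim_nat {M : Type v} [Monoid M] [HasColimitsOfSize.{v, 0} C]
    (W : SingleObj M ⥤ C) {c c' : C} (f : colimit W ⟶ c) (g : c ⟶ c') :
    (eColim W c' (f ≫ g)).1 = (eColim W c f).1 ≫ g := by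
  simp [eColim]

lemma eColim_symm_nat {M : Type v} [Monoid M] [HasColimitsOfSize.{v, 0} C]
    (W : SingleObj M ⥤ C) {c c' : C} (g : c ⟶ c')
    (t : {t : W.obj (SingleObj.star M) ⟶ c // ∀ m : M, W.map m ≫ t = t})
    (t' : {t : W.obj (SingleObj.star M) ⟶ c' // ∀ m : M, W.map m ≫ t = t})
    (h : t'.1 = t.1 ≫ g) :
    (eColim W c').symm t' = (eColim W c).symm t ≫ g := by
  apply colimit.hom_ext
  rintro ⟨⟩
  simp [eColim, h]

/-- Hom out of a coproduct. -/
noncomputable def eSigma {ι : Type v} [HasColimitsOfSize.{v, v} C] (f : ι → C) (c : C) :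
    (∐ f ⟶ c) ≃ ∀ i, (f i ⟶ c) where
  toFun g i := Sigma.ι f i ≫ g
  invFun h := Sigma.desc h
  left_inv g := by
    apply Sigma.hom_ext
    intro i
    simp
  right_inv h := by
    funext i
    simp

lemma eSigma_symm_nat {ι : Type v} [HasColimitsOfSize.{v, v} C] (f : ι → C) {c c' : C}
    (g : c ⟶ c') (k : ∀ i, f i ⟶ c) (k' : ∀ i, f i ⟶ c') (h : ∀ i, k' i = k i ≫ g) :
    (eSigma f c').symm k' = (eSigma f c).symm k ≫ g := by
  apply Sigma.hom_ext
  intro i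
  simp [eSigma, h]

section Groups

variable {G H : Type v} [Group G] [Group H] (α : G →* H) (K : Subgroup H)

/-- The stabilizer subgroup `α⁻¹(d.out K d.out⁻¹)`. -/
noncomputable abbrev Ld (d : DoubleCoset.Quotient (α.range : Set H) (K : Set H)) : Subgroup G :=
  Subgroup.comap α (Subgroup.map (MulAut.conj d.out).toMonoidHom K)

lemma mem_Ld_iff {d : DoubleCoset.Quotient (α.range : Set H) (K : Set H)} {g : G} :
    g ∈ Ld α K d ↔ α g • ((d.out : H) : H ⧸ K) = ((d.out : H) : H ⧸ K) := by
  rw [MulAction.Quotient.smul_mk, smul_eq_mul, QuotientGroup.eq]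
  simp only [Subgroup.mem_comap, Subgroup.mem_map, MulEquiv.coe_toMonoidHom, MulAut.conj_apply]
  constructor
  · rintro ⟨k, hk, hEq⟩
    have : (α g * d.out)⁻¹ * d.out = k⁻¹ := by
      rw [← hEq]; group
    rw [this]; exact K.inv_mem hk
  · intro hmem
    refine ⟨((α g * d.out)⁻¹ * d.out)⁻¹, K.inv_mem hmem, ?_⟩
    group

/-- The projection from `H ⧸ K` to double cosets. -/
def dq : H ⧸ K → DoubleCoset.Quotient (α.range : Set H) (K : Set H) :=
  Quotient.map' id fun x y hxy => by
    rw [QuotientGroup.leftRel_apply] at hxy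
    rw [DoubleCoset.setoid, Setoid.ker_def]
    apply DoubleCoset.doubleCoset_eq_of_mem
    refine DoubleCoset.mem_doubleCoset.2 ⟨1, Subgroup.one_mem _, y⁻¹ * x, ?_, by simp only [id_eq]; group⟩
    simpa using K.inv_mem hxy

lemma dq_mk (x : H) : dq α K (x : H ⧸ K) = DoubleCoset.mk _ _ x := rfl

lemma dq_smul (g : G) (s : H ⧸ K) : dq α K (α g • s) = dq α K s := by
  induction s using Quotient.inductionOn' with
  | h x =>
    show dq α K ((α g) • (x : H ⧸ K)) = dq α K (x : H ⧸ K)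
    rw [MulAction.Quotient.smul_mk, smul_eq_mul, dq_mk, dq_mk]
    symm
    rw [DoubleCoset.eq]
    exact ⟨α g, ⟨g, rfl⟩, 1, K.one_mem, by group⟩

lemma exists_rep (s : H ⧸ K) :
    ∃ g : G, α g • (((dq α K s).out : H) : H ⧸ K) = s := by
  induction s using Quotient.inductionOn' with
  | h x =>
    set o := ((dq α K (x : H ⧸ K)).out : H) with ho
    have h1 : DoubleCoset.mk (α.range : Subgroup H) K o = DoubleCoset.mk _ _ x := by
      rw [ho, dq_mk]; exact DoubleCoset.out_eq' _ _ _
    rw [DoubleCoset.eq] at h1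
    obtain ⟨a, ⟨g, rfl⟩, b, hb, hx⟩ := h1
    refine ⟨g, ?_⟩
    show (α g) • ((o : H) : H ⧸ K) = (x : H ⧸ K)
    rw [MulAction.Quotient.smul_mk, smul_eq_mul, QuotientGroup.eq]
    have hcalc : (α g * o)⁻¹ * (α g * o * b) = b := by group
    rw [hx, hcalc]
    exact hb

end Groups

section PFunctor

variable {G H : Type v} [Group G] [Group H] (α : G →* H) (K : Subgroup H)

/-- The coinduced object `∏_{H/K} c` with its `H`-action. -/
noncomputable def P [HasLimitsOfSize.{v, v} C] (c : C) : SingleObj H ⥤ C where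
  obj _ := ∏ᶜ fun _ : H ⧸ K => c
  map h := Pi.lift fun s => Pi.π (fun _ : H ⧸ K => c) ((h : H)⁻¹ • s)
  map_id x := by
    apply Pi.hom_ext
    intro s
    rw [Pi.lift_π, Category.id_comp]
    show Pi.π (fun _ : H ⧸ K => c) ((1 : H)⁻¹ • s) = Pi.π (fun _ : H ⧸ K => c) s
    rw [inv_one, one_smul]
  map_comp {x y z} f g := by
    apply Pi.hom_ext
    intro s
    show (Pi.lift fun s => Pi.π (fun _ : H ⧸ K => c) (((g : H) * (f : H))⁻¹ • s)) ≫
        Pi.π (fun _ : H ⧸ K => c) s =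
      ((Pi.lift fun s => Pi.π (fun _ : H ⧸ K => c) ((f : H)⁻¹ • s)) ≫
        Pi.lift fun s => Pi.π (fun _ : H ⧸ K => c) ((g : H)⁻¹ • s)) ≫
        Pi.π (fun _ : H ⧸ K => c) s
    rw [Pi.lift_π, Category.assoc, Pi.lift_π, Pi.lift_π, mul_inv_rev, mul_smul]

attribute [reducible] P

lemma P_map_π [HasLimitsOfSize.{v, v} C] (c : C) (h : H) (s : H ⧸ K) :
    (P (C := C) K c).map (X := SingleObj.star H) (Y := SingleObj.star H) h ≫
      Pi.π (fun _ : H ⧸ K => c) s = Pi.π (fun _ : H ⧸ K => c) (h⁻¹ • s) := by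
  show (Pi.lift fun s => Pi.π (fun _ : H ⧸ K => c) (h⁻¹ • s)) ≫ Pi.π _ s = _
  rw [Pi.lift_π]

/-- The morphism `P c ⟶ P c'` induced by `g : c ⟶ c'`. -/
noncomputable def Pmap [HasLimitsOfSize.{v, v} C] {c c' : C} (g : c ⟶ c') :
    P (C := C) K c ⟶ P K c' where
  app _ := Limits.Pi.map fun _ => g
  naturality _ _ h := by
    apply Pi.hom_ext
    intro s
    show ((P K c).map h ≫ Limits.Pi.map (fun _ => g)) ≫ Pi.π _ s =
      (Limits.Pi.map (fun _ => g) ≫ (P K c').map h) ≫ Pi.π _ s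
    rw [Category.assoc, Category.assoc, pi_map_π, P_map_π, pi_map_π, ← Category.assoc,
      P_map_π]

lemma Pmap_app_π [HasLimitsOfSize.{v, v} C] {c c' : C} (g : c ⟶ c') (j : SingleObj H)
    (s : H ⧸ K) :
    (Pmap (C := C) K g).app j ≫ Pi.π (fun _ : H ⧸ K => c') s =
      Pi.π (fun _ : H ⧸ K => c) s ≫ g := by
  show Limits.Pi.map (fun _ => g) ≫ Pi.π (fun _ : H ⧸ K => c') s = Pi.π (fun _ : H ⧸ K => c) s ≫ g
  rw [pi_map_π]

section eP

variable [HasLimitsOfSize.{v, v} C] (Z : SingleObj H ⥤ C) {c : C}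

/-- Component of the map `Z ⟶ P c` induced by an invariant map `t`. -/
noncomputable def ePapp (t : {t : Z.obj (SingleObj.star H) ⟶ c // ∀ k : K, Z.map ((k : H)) ≫ t = t}) :
    Z.obj (SingleObj.star H) ⟶ ∏ᶜ fun _ : H ⧸ K => c :=
  Pi.lift fun s => Quotient.liftOn' s (fun x => Z.map (X := SingleObj.star H) (Y := SingleObj.star H) (x⁻¹ : H) ≫ t.1)
    (by
      intro x y hxy
      rw [QuotientGroup.leftRel_apply] at hxy
      have hy : (y⁻¹ : H) = (x⁻¹ * y)⁻¹ * x⁻¹ := by group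
      have ht : Z.map (X := SingleObj.star H) (Y := SingleObj.star H) ((x⁻¹ * y)⁻¹ : H) ≫ t.1 = t.1 :=
        t.2 ⟨(x⁻¹ * y)⁻¹, K.inv_mem hxy⟩
      rw [hy, smap_mul, Category.assoc, ht])

lemma ePapp_π (t : {t : Z.obj (SingleObj.star H) ⟶ c // ∀ k : K, Z.map ((k : H)) ≫ t = t})
    (x : H) :
    ePapp K Z t ≫ Pi.π (fun _ : H ⧸ K => c) ((x : H) : H ⧸ K) =
      Z.map (X := SingleObj.star H) (Y := SingleObj.star H) (x⁻¹ : H) ≫ t.1 := by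
  rw [ePapp, Pi.lift_π]
  rfl

/-- Lemma B : `K`-invariant maps `Z(*) ⟶ c` are `H`-maps `Z ⟶ P c`. -/
noncomputable def eP :
    {t : Z.obj (SingleObj.star H) ⟶ c // ∀ k : K, Z.map ((k : H)) ≫ t = t} ≃
      (Z ⟶ P K c) where
  toFun t :=
    { app := fun _ => ePapp K Z t
      naturality := fun _ _ h => by
        apply Pi.hom_ext
        intro s
        induction s using Quotient.inductionOn' with
        | h x =>
          have hmk : ((h : H)⁻¹ • ((x : H) : H ⧸ K)) = (((h : H)⁻¹ * x : H) : H ⧸ K) := by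
            rw [MulAction.Quotient.smul_mk, smul_eq_mul]
          have hx : (((h : H)⁻¹ * x)⁻¹ : H) = x⁻¹ * h := by group
          rw [Category.assoc, Category.assoc, P_map_π, hmk]
          show Z.map h ≫ ePapp K Z t ≫ Pi.π _ (((x : H)) : H ⧸ K) =
            ePapp K Z t ≫ Pi.π _ ((((h : H)⁻¹ * x : H)) : H ⧸ K)
          rw [ePapp_π, ePapp_π, hx, smap_mul, Category.assoc] }
  invFun φ := ⟨φ.app (SingleObj.star H) ≫ Pi.π (fun _ : H ⧸ K => c) (((1 : H)) : H ⧸ K),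
    by
      intro k
      rw [← Category.assoc, φ.naturality ((k : H) : SingleObj.star H ⟶ SingleObj.star H),
        Category.assoc, P_map_π]
      have h1 : ((k : H)⁻¹ • (((1 : H)) : H ⧸ K)) = (((1 : H)) : H ⧸ K) := by
        rw [MulAction.Quotient.smul_mk, smul_eq_mul, mul_one, QuotientGroup.eq]
        simpa using k.2
      rw [h1]⟩
  left_inv t := by
    apply Subtype.ext
    show ePapp K Z t ≫ Pi.π _ (((1 : H)) : H ⧸ K) = t.1
    rw [ePapp_π, inv_one, smap_one, Category.id_comp]
  right_inv φ := by
    ext _ s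
    induction s using Quotient.inductionOn' with
    | h x =>
      show ePapp K Z _ ≫ Pi.π _ (((x : H)) : H ⧸ K) = φ.app _ ≫ Pi.π _ (((x : H)) : H ⧸ K)
      rw [ePapp_π]
      rw [← Category.assoc, φ.naturality ((x⁻¹ : H) : SingleObj.star H ⟶ SingleObj.star H),
        Category.assoc, P_map_π]
      have h1 : (((x⁻¹ : H))⁻¹ • (((1 : H)) : H ⧸ K)) = ((x : H) : H ⧸ K) := by
        rw [MulAction.Quotient.smul_mk, smul_eq_mul, inv_inv, mul_one]
      rw [h1]

lemma eP_nat {c' : C} (g : c ⟶ c')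
    (t : {t : Z.obj (SingleObj.star H) ⟶ c // ∀ k : K, Z.map ((k : H)) ≫ t = t})
    (t' : {t : Z.obj (SingleObj.star H) ⟶ c' // ∀ k : K, Z.map ((k : H)) ≫ t = t})
    (h : t'.1 = t.1 ≫ g) :
    eP K Z t' = eP K Z t ≫ Pmap K g := by
  ext _ s
  induction s using Quotient.inductionOn' with
  | h x =>
    show ePapp K Z t' ≫ Pi.π _ (((x : H)) : H ⧸ K) =
      (ePapp K Z t ≫ (Pmap K g).app _) ≫ Pi.π _ (((x : H)) : H ⧸ K)
    rw [ePapp_π, Category.assoc, Pmap_app_π, ← Category.assoc, ePapp_π, h, Category.assoc]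

end eP

end PFunctor


section eD

variable {G H : Type v} [Group G] [Group H] (α : G →* H) (K : Subgroup H)
variable [HasLimitsOfSize.{v, v} C] (X : SingleObj G ⥤ C) {c : C}

/-- A chosen element of `G` carrying the double-coset representative of `s` to `s`. -/
noncomputable def gsel (s : H ⧸ K) : G := (exists_rep α K s).choose

lemma gsel_spec (s : H ⧸ K) :
    α (gsel α K s) • (((dq α K s).out : H) : H ⧸ K) = s :=
  (exists_rep α K s).choose_spec

omit [HasLimitsOfSize.{v, v} C] in
lemma key (d : DoubleCoset.Quotient (α.range : Set H) (K : Set H))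
    (t : X.obj (SingleObj.star G) ⟶ c)
    (ht : ∀ m : Ld α K d, X.map ((m : G)) ≫ t = t) (g₁ g₂ : G)
    (h : α g₁ • ((d.out : H) : H ⧸ K) = α g₂ • ((d.out : H) : H ⧸ K)) :
    X.map (X := SingleObj.star G) (Y := SingleObj.star G) (g₁⁻¹ : G) ≫ t =
      X.map (X := SingleObj.star G) (Y := SingleObj.star G) (g₂⁻¹ : G) ≫ t := by
  have hm : g₂⁻¹ * g₁ ∈ Ld α K d := by
    rw [mem_Ld_iff, map_mul, mul_smul, h, ← mul_smul, ← map_mul, inv_mul_cancel, map_one,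
      one_smul]
  have hminv : g₁⁻¹ * g₂ ∈ Ld α K d := by
    have := (Ld α K d).inv_mem hm
    rwa [mul_inv_rev, inv_inv] at this
  have h1 : (g₁⁻¹ : G) = (g₁⁻¹ * g₂) * g₂⁻¹ := by group
  have ht' : X.map (X := SingleObj.star G) (Y := SingleObj.star G) ((g₁⁻¹ * g₂ : G)) ≫ t = t :=
    ht ⟨g₁⁻¹ * g₂, hminv⟩
  rw [h1, smap_mul, Category.assoc, ht']

/-- Lemma D: equivariant maps into the coinduced product are families of invariant maps
indexed by double cosets. -/
noncomputable def eD :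
    {u : X.obj (SingleObj.star G) ⟶ ∏ᶜ fun _ : H ⧸ K => c //
      ∀ g : G, X.map g ≫ u =
        u ≫ (P K c).map (X := SingleObj.star H) (Y := SingleObj.star H) (α g)} ≃
      ∀ d : DoubleCoset.Quotient (α.range : Set H) (K : Set H),
        {t : X.obj (SingleObj.star G) ⟶ c // ∀ m : Ld α K d, X.map ((m : G)) ≫ t = t} where
  toFun u d := ⟨u.1 ≫ Pi.π (fun _ : H ⧸ K => c) ((d.out : H) : H ⧸ K), by
    intro m
    have hcomp : X.map ((m : G)) ≫ u.1 ≫ Pi.π (fun _ : H ⧸ K => c) ((d.out : H) : H ⧸ K) =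
        u.1 ≫ Pi.π (fun _ : H ⧸ K => c) ((α (m : G))⁻¹ • ((d.out : H) : H ⧸ K)) := by
      rw [← Category.assoc, u.2 (m : G), Category.assoc, P_map_π]
    have hfix : (α (m : G))⁻¹ • ((d.out : H) : H ⧸ K) = ((d.out : H) : H ⧸ K) := by
      conv_lhs => rw [← (mem_Ld_iff α K).mp m.2]
      rw [inv_smul_smul]
    rw [hcomp, hfix]⟩
  invFun t := ⟨Pi.lift fun s =>
      X.map (X := SingleObj.star G) (Y := SingleObj.star G) ((gsel α K s)⁻¹ : G) ≫
        (t (dq α K s)).1, by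
    intro g
    apply Pi.hom_ext
    intro s
    rw [Category.assoc, Category.assoc, Pi.lift_π, P_map_π, Pi.lift_π, ← Category.assoc,
      ← smap_mul]
    have hdq : dq α K ((α g)⁻¹ • s) = dq α K s := by
      rw [← map_inv, dq_smul]
    rw [hdq]
    have hspec' := gsel_spec α K ((α g)⁻¹ • s)
    rw [hdq] at hspec'
    have hcond : α (g⁻¹ * gsel α K s) • (((dq α K s).out : H) : H ⧸ K) =
        α (gsel α K ((α g)⁻¹ • s)) • (((dq α K s).out : H) : H ⧸ K) := by
      rw [map_mul, mul_smul, gsel_spec, hspec', map_inv]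
    have := key α K X (dq α K s) (t (dq α K s)).1 (t (dq α K s)).2 (g⁻¹ * gsel α K s)
      (gsel α K ((α g)⁻¹ • s)) hcond
    rw [mul_inv_rev, inv_inv] at this
    exact this⟩
  left_inv u := by
    apply Subtype.ext
    apply Pi.hom_ext
    intro s
    rw [Pi.lift_π]
    have hcomp : X.map ((gsel α K s)⁻¹ : G) ≫ u.1 ≫
        Pi.π (fun _ : H ⧸ K => c) (((dq α K s).out : H) : H ⧸ K) =
        u.1 ≫ Pi.π (fun _ : H ⧸ K => c)
          ((α ((gsel α K s)⁻¹ : G))⁻¹ • (((dq α K s).out : H) : H ⧸ K)) := by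
      rw [← Category.assoc, u.2 ((gsel α K s)⁻¹ : G), Category.assoc, P_map_π]
    rw [hcomp, map_inv, inv_inv, gsel_spec]
  right_inv t := by
    funext d
    apply Subtype.ext
    dsimp only
    rw [Pi.lift_π]
    have hd : dq α K ((d.out : H) : H ⧸ K) = d := by
      rw [dq_mk]
      exact DoubleCoset.out_eq' _ _ _
    have hspec := gsel_spec α K ((d.out : H) : H ⧸ K)
    rw [hd] at hspec
    rw [hd]
    have hcond : α (gsel α K ((d.out : H) : H ⧸ K)) • ((d.out : H) : H ⧸ K) =
        α (1 : G) • ((d.out : H) : H ⧸ K) := by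
      rw [hspec, map_one, one_smul]
    have := key α K X d (t d).1 (t d).2 _ 1 hcond
    rw [inv_one, smap_one, Category.id_comp] at this
    exact this

lemma eD_nat {c' : C} (g : c ⟶ c')
    (u : {u : X.obj (SingleObj.star G) ⟶ ∏ᶜ fun _ : H ⧸ K => c //
      ∀ g : G, X.map g ≫ u =
        u ≫ (P K c).map (X := SingleObj.star H) (Y := SingleObj.star H) (α g)})
    (u' : {u : X.obj (SingleObj.star G) ⟶ ∏ᶜ fun _ : H ⧸ K => c' //
      ∀ g : G, X.map g ≫ u =
        u ≫ (P K c').map (X := SingleObj.star H) (Y := SingleObj.star H) (α g)})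
    (h : u'.1 = u.1 ≫ Limits.Pi.map fun _ => g)
    (d : DoubleCoset.Quotient (α.range : Set H) (K : Set H)) :
    (eD α K X u' d).1 = (eD α K X u d).1 ≫ g := by
  show u'.1 ≫ Pi.π _ _ = (u.1 ≫ Pi.π _ _) ≫ g
  rw [h, Category.assoc, pi_map_π, Category.assoc]

end eD

section eRes

variable {G H : Type v} [Group G] [Group H] (α : G →* H) (K : Subgroup H)
variable [HasLimitsOfSize.{v, v} C] (X : SingleObj G ⥤ C) {c : C}

/-- Unpacking a natural transformation `X ⟶ α^*(P c)` into an equivariant map. -/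
def eRes :
    (X ⟶ SingleObj.mapHom G H α ⋙ P K c) ≃
      {u : X.obj (SingleObj.star G) ⟶ ∏ᶜ fun _ : H ⧸ K => c //
        ∀ g : G, X.map g ≫ u =
          u ≫ (P K c).map (X := SingleObj.star H) (Y := SingleObj.star H) (α g)} where
  toFun φ := ⟨φ.app (SingleObj.star G), fun g => φ.naturality g⟩
  invFun u :=
    { app := fun _ => u.1
      naturality := fun _ _ g => u.2 g }
  left_inv φ := by
    ext
    rfl
  right_inv u := rfl

lemma eRes_nat {c' : C} (g : c ⟶ c') (φ : X ⟶ SingleObj.mapHom G H α ⋙ P K c)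
    (φ' : X ⟶ SingleObj.mapHom G H α ⋙ P K c')
    (h : φ' = φ ≫ Functor.whiskerLeft (SingleObj.mapHom G H α) (Pmap K g)) :
    (eRes α K X φ').1 = (eRes α K X φ).1 ≫ Limits.Pi.map fun _ => g := by
  rw [h]
  rfl

end eRes

section Final

variable {G H : Type v} [Group G] [Group H] (α : G →* H) (K : Subgroup H)
variable [HasLimitsOfSize.{v, v} C] [HasColimitsOfSize.{v, 0} C] [HasColimitsOfSize.{v, v} C]
variable (L : (SingleObj G ⥤ C) ⥤ (SingleObj H ⥤ C))
variable (adj : L ⊣ (Functor.whiskeringLeft (SingleObj G) (SingleObj H) C).obj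
  (SingleObj.mapHom G H α))
variable (X : SingleObj G ⥤ C)

/-- The composite equivalence. -/
noncomputable def E (c : C) :
    (colimit (SingleObj.mapHom K H K.subtype ⋙ L.obj X) ⟶ c) ≃
      ((∐ fun d : DoubleCoset.Quotient (α.range : Set H) (K : Set H) =>
        colimit (SingleObj.mapHom (Ld α K d) G (Ld α K d).subtype ⋙ X)) ⟶ c) :=
  (eColim (SingleObj.mapHom K H K.subtype ⋙ L.obj X) c).trans <|
  (eP K (L.obj X) (c := c)).trans <|
  (adj.homEquiv X (P K c)).trans <|
  (eRes α K X (c := c)).trans <|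
  (eD α K X (c := c)).trans <|
  (Equiv.piCongrRight fun d =>
    (eColim (SingleObj.mapHom (Ld α K d) G (Ld α K d).subtype ⋙ X) c).symm).trans
  (eSigma (fun d : DoubleCoset.Quotient (α.range : Set H) (K : Set H) =>
    colimit (SingleObj.mapHom (Ld α K d) G (Ld α K d).subtype ⋙ X)) c).symm

lemma E_nat {c c' : C} (f : colimit (SingleObj.mapHom K H K.subtype ⋙ L.obj X) ⟶ c)
    (g : c ⟶ c') :
    E α K L adj X c' (f ≫ g) = E α K L adj X c f ≫ g := by
  have h1 := eColim_nat (SingleObj.mapHom K H K.subtype ⋙ L.obj X) f g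
  have h2 := eP_nat K (L.obj X) g
    (eColim (SingleObj.mapHom K H K.subtype ⋙ L.obj X) c f)
    (eColim (SingleObj.mapHom K H K.subtype ⋙ L.obj X) c' (f ≫ g)) h1
  have h3 : adj.homEquiv X (P K c')
        (eP K (L.obj X) (eColim (SingleObj.mapHom K H K.subtype ⋙ L.obj X) c' (f ≫ g))) =
      adj.homEquiv X (P K c)
        (eP K (L.obj X) (eColim (SingleObj.mapHom K H K.subtype ⋙ L.obj X) c f)) ≫
        Functor.whiskerLeft (SingleObj.mapHom G H α) (Pmap K g) := by
    rw [h2]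
    exact adj.homEquiv_naturality_right _ _
  have h4 := eRes_nat α K X g _ _ h3
  have h5 := fun d => eD_nat α K X g _ _ h4 d
  have h6 := fun d => eColim_symm_nat
    (SingleObj.mapHom (Ld α K d) G (Ld α K d).subtype ⋙ X) g _ _ (h5 d)
  simp only [E, Equiv.trans_apply, Equiv.piCongrRight_apply]
  exact eSigma_symm_nat _ g _ _ (fun d => h6 d)

end Final

end Stmt5Aux

theorem stmt5 {C : Type*} [Category.{v} C] [HasLimits C] [HasColimits C]
    [HasColimitsOfSize.{v, 0} C]
    {G H : Type v} [Group G] [Group H] (α : G →* H) (K : Subgroup H)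
    (L : (SingleObj G ⥤ C) ⥤ (SingleObj H ⥤ C))
    (_adj : L ⊣ (Functor.whiskeringLeft (SingleObj G) (SingleObj H) C).obj
      (SingleObj.mapHom G H α))
    (X : SingleObj G ⥤ C) :
    Nonempty
      (colimit (SingleObj.mapHom K H K.subtype ⋙ L.obj X) ≅
        ∐ fun d : DoubleCoset.Quotient (α.range : Set H) (K : Set H) =>
          colimit (SingleObj.mapHom
            (Subgroup.comap α (Subgroup.map (MulAut.conj d.out).toMonoidHom K)) G
            (Subgroup.comap α (Subgroup.map (MulAut.conj d.out).toMonoidHom K)).subtype ⋙ X)) := by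
  exact ⟨{
    hom := (Stmt5Aux.E α K L _adj X _).symm (𝟙 _)
    inv := Stmt5Aux.E α K L _adj X _ (𝟙 _)
    hom_inv_id := by
      apply (Stmt5Aux.E α K L _adj X _).injective
      rw [Stmt5Aux.E_nat, Equiv.apply_symm_apply, Category.id_comp]
    inv_hom_id := by
      rw [← Stmt5Aux.E_nat, Category.id_comp, Equiv.apply_symm_apply] }⟩
end

section
/- In the category of sets (or any presheaf category), pushouts along a monomorphism commute with taking H-fixed points: if A → B is an H-equivariant monomorphism of H-sets and A → C an H-equivariant map, then the canonical map (B ⊔_A C)^H ≅ B^H ⊔_{A^H} C^H is a bijection, where the pushout is computed in H-sets and fixed points in Set. -/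
/-!
STATEMENT 6: In `H`-sets, pushouts along a monomorphism commute with
`H`-fixed points. The pushout `B ⊔_A C` of `f : A → B` (an injective
equivariant map) and `g : A → C` is modelled as `Quot` of the relation
`inl (f a) ~ inr (g a)`, with its `H`-action `σ` (characterized by `hσ`);
the pushout `B^H ⊔_{A^H} C^H` of the restricted maps is modelled likewise.
The canonical comparison map `c` is a bijection onto the fixed points
`(B ⊔_A C)^H`.
-/

/-- The pushout relation on `B ⊕ C` identifying `inl (f a)` with `inr (g a)`. -/
def poRel {A B C : Type*} (f : A → B) (g : A → C) :
    B ⊕ C → B ⊕ C → Prop :=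
  fun x y => ∃ a : A, x = .inl (f a) ∧ y = .inr (g a)

/-- The pushout relation on fixed points. -/
def poRelFix {H A B C : Type*} [Group H] [MulAction H A] [MulAction H B]
    [MulAction H C] (f : A → B) (g : A → C) :
    ({b : B // ∀ h : H, h • b = b} ⊕ {c : C // ∀ h : H, h • c = c}) →
    ({b : B // ∀ h : H, h • b = b} ⊕ {c : C // ∀ h : H, h • c = c}) → Prop :=
  fun x y => ∃ a : A, (∀ h : H, h • a = a) ∧
    (x.elim (fun b => b.1 = f a) fun _ => False) ∧
    (y.elim (fun _ => False) fun c => c.1 = g a)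

/-- Explicit description of the equivalence relation generated by `poRel`. -/
def stmt6E {A B C : Type*} (f : A → B) (g : A → C) : B ⊕ C → B ⊕ C → Prop
  | .inl b, .inl b' => b = b' ∨ ∃ a a', b = f a ∧ b' = f a' ∧ g a = g a'
  | .inl b, .inr c => ∃ a, b = f a ∧ c = g a
  | .inr c, .inl b => ∃ a, b = f a ∧ c = g a
  | .inr c, .inr c' => c = c'

theorem stmt6E_exact {A B C : Type*} (f : A → B) (g : A → C)
    (hfinj : Function.Injective f) {x y : B ⊕ C}
    (h : Quot.mk (poRel f g) x = Quot.mk (poRel f g) y) : stmt6E f g x y := by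
  have h' := Quot.eqvGen_exact h
  clear h
  induction h' with
  | rel x y hxy =>
    obtain ⟨a, rfl, rfl⟩ := hxy
    exact ⟨a, rfl, rfl⟩
  | refl x =>
    cases x with
    | inl b => exact Or.inl rfl
    | inr c => rfl
  | symm x y _ ih =>
    cases x with
    | inl b =>
      cases y with
      | inl b' =>
        rcases ih with h | ⟨a, a', ha, ha', hgg⟩
        · exact Or.inl h.symm
        · exact Or.inr ⟨a', a, ha', ha, hgg.symm⟩
      | inr c => exact ih
    | inr c =>
      cases y with
      | inl b => exact ih
      | inr c' => exact ih.symm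
  | trans x y z _ _ ih1 ih2 =>
    cases x with
    | inl b =>
      cases y with
      | inl b' =>
        cases z with
        | inl b'' =>
          rcases ih1 with rfl | ⟨a, a', ha, ha', hgg⟩
          · exact ih2
          · rcases ih2 with rfl | ⟨a2, a2', ha2, ha2', hgg2⟩
            · exact Or.inr ⟨a, a', ha, ha', hgg⟩
            · have : a' = a2 := hfinj (ha'.symm.trans ha2)
              exact Or.inr ⟨a, a2', ha, ha2', by rw [hgg, this, hgg2]⟩
        | inr c =>
          rcases ih1 with rfl | ⟨a, a', ha, ha', hgg⟩
          · exact ih2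
          · obtain ⟨a2, ha2, hc⟩ := ih2
            have : a' = a2 := hfinj (ha'.symm.trans ha2)
            exact ⟨a, ha, by rw [hc, ← this, ← hgg]⟩
      | inr c =>
        obtain ⟨a, ha, hc⟩ := ih1
        cases z with
        | inl b' =>
          obtain ⟨a', ha', hc'⟩ := ih2
          exact Or.inr ⟨a, a', ha, ha', hc.symm.trans hc'⟩
        | inr c' => exact ⟨a, ha, ih2 ▸ hc⟩
    | inr c =>
      cases y with
      | inl b =>
        obtain ⟨a, ha, hc⟩ := ih1
        cases z with
        | inl b' =>
          rcases ih2 with rfl | ⟨a2, a2', ha2, ha2', hgg2⟩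
          · exact ⟨a, ha, hc⟩
          · have : a = a2 := hfinj (ha.symm.trans ha2)
            exact ⟨a2', ha2', by rw [hc, this, hgg2]⟩
        | inr c' =>
          obtain ⟨a', ha', hc'⟩ := ih2
          have : a = a' := hfinj (ha.symm.trans ha')
          exact hc.trans (this ▸ hc'.symm)
      | inr c' =>
        cases ih1
        exact ih2

theorem stmt6 {H A B C : Type*} [Group H] [MulAction H A] [MulAction H B]
    [MulAction H C] (f : A → B) (g : A → C)
    (hfinj : Function.Injective f)
    (hf : ∀ (h : H) (a : A), f (h • a) = h • f a)
    (hg : ∀ (h : H) (a : A), g (h • a) = h • g a)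
    (σ : H → Quot (poRel f g) → Quot (poRel f g))
    (hσl : ∀ (h : H) (b : B), σ h (Quot.mk _ (.inl b)) = Quot.mk _ (.inl (h • b)))
    (hσr : ∀ (h : H) (c : C), σ h (Quot.mk _ (.inr c)) = Quot.mk _ (.inr (h • c)))
    (c : Quot (poRelFix (H := H) f g) → Quot (poRel f g))
    (hcl : ∀ b : {b : B // ∀ h : H, h • b = b},
      c (Quot.mk _ (.inl b)) = Quot.mk _ (.inl b.1))
    (hcr : ∀ y : {c : C // ∀ h : H, h • c = c},
      c (Quot.mk _ (.inr y)) = Quot.mk _ (.inr y.1)) :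
    Function.Injective c ∧
      Set.range c = {q : Quot (poRel f g) | ∀ h : H, σ h q = q} := by
  constructor
  · intro x y hxy
    induction x using Quot.ind with | _ x => ?_
    induction y using Quot.ind with | _ y => ?_
    match x, y with
    | .inl b, .inl b' =>
        rw [hcl, hcl] at hxy
        rcases stmt6E_exact f g hfinj hxy with h | ⟨a, a', ha, ha', hgg⟩
        · exact congrArg _ (congrArg _ (Subtype.ext h))
        · have hafix : ∀ h : H, h • a = a := fun h =>
            hfinj (by rw [hf, ← ha, b.2, ha])
          have hafix' : ∀ h : H, h • a' = a' := fun h =>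
            hfinj (by rw [hf, ← ha', b'.2, ha'])
          have hgfix : ∀ h : H, h • (g a) = g a := fun h => by rw [← hg, hafix]
          have hgfix' : ∀ h : H, h • (g a') = g a' := fun h => by rw [← hg, hafix']
          have e1 : Quot.mk (poRelFix (H := H) f g) (.inl b)
              = Quot.mk _ (.inr ⟨g a, hgfix⟩) := Quot.sound ⟨a, hafix, ha, rfl⟩
          have e2 : Quot.mk (poRelFix (H := H) f g) (.inl b')
              = Quot.mk _ (.inr ⟨g a', hgfix'⟩) := Quot.sound ⟨a', hafix', ha', rfl⟩
          rw [e1, e2]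
          exact congrArg _ (congrArg _ (Subtype.ext hgg))
    | .inl b, .inr y =>
        rw [hcl, hcr] at hxy
        obtain ⟨a, ha, hy⟩ := stmt6E_exact f g hfinj hxy
        have hafix : ∀ h : H, h • a = a := fun h =>
          hfinj (by rw [hf, ← ha, b.2, ha])
        exact Quot.sound ⟨a, hafix, ha, hy⟩
    | .inr y, .inl b =>
        rw [hcr, hcl] at hxy
        obtain ⟨a, ha, hy⟩ := stmt6E_exact f g hfinj hxy.symm
        have hafix : ∀ h : H, h • a = a := fun h =>
          hfinj (by rw [hf, ← ha, b.2, ha])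
        exact (Quot.sound ⟨a, hafix, ha, hy⟩).symm
    | .inr y, .inr y' =>
        rw [hcr, hcr] at hxy
        have := stmt6E_exact f g hfinj hxy
        exact congrArg _ (congrArg _ (Subtype.ext this))
  · ext q
    constructor
    · rintro ⟨p, rfl⟩
      induction p using Quot.ind with | _ p => ?_
      cases p with
      | inl b =>
        intro h
        rw [hcl, hσl, b.2]
      | inr y =>
        intro h
        rw [hcr, hσr, y.2]
    · intro hq
      induction q using Quot.ind with | _ p => ?_
      cases p with
      | inl b =>
        have key : ∀ h : H, h • b = b ∨
            ∃ a a', h • b = f a ∧ b = f a' ∧ g a = g a' := by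
          intro h
          have := hq h
          rw [hσl] at this
          exact stmt6E_exact f g hfinj this
        by_cases hb : ∀ h : H, h • b = b
        · exact ⟨Quot.mk _ (.inl ⟨b, hb⟩), hcl _⟩
        · push_neg at hb
          obtain ⟨h0, hh0⟩ := hb
          rcases key h0 with h | ⟨a, a', ha, ha', hgg⟩
          · exact absurd h hh0
          · have hgfix : ∀ h : H, h • (g a') = g a' := by
              intro h
              rcases key h with hfixb | ⟨a2, a2', ha2, ha2', hgg2⟩
              · have : h • a' = a' := hfinj (by rw [hf, ← ha', hfixb])
                rw [← hg, this]
              · have e1 : a2' = a' := hfinj (ha2'.symm.trans ha')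
                have e2 : h • a' = a2 := hfinj (by rw [hf, ← ha', ha2])
                rw [← hg, e2, hgg2, e1]
            refine ⟨Quot.mk _ (.inr ⟨g a', hgfix⟩), ?_⟩
            rw [hcr]
            show Quot.mk (poRel f g) (.inr (g a')) = Quot.mk _ (.inl b)
            rw [ha']
            exact (Quot.sound ⟨a', rfl, rfl⟩).symm
      | inr c0 =>
        have hfix : ∀ h : H, h • c0 = c0 := by
          intro h
          have := hq h
          rw [hσr] at this
          exact stmt6E_exact f g hfinj this
        exact ⟨Quot.mk _ (.inr ⟨c0, hfix⟩), hcr _⟩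
end

section
/- Let Γ = {(h, φ(h)) : h ∈ H} ≤ G × Σₙ be a graph subgroup with H ≤ G and φ : H → Σₙ a homomorphism, and let A be a set with trivial (G × Σₙ)-action. Then the G-set ((G × Σₙ)/Γ × Aⁿ)/Σₙ, where Σₙ acts diagonally (on Aⁿ by permuting coordinates), is isomorphic as a G-set to G ×_H (Aⁿ with H acting through φ by permuting coordinates); in particular when A = * is a point, it is isomorphic to G/H. -/
/-!
STATEMENT 11: Let `Γ = {(h, φ(h))} ≤ G × Σₙ` be the graph subgroup of
`φ : H →* Σₙ`, and `A` a set with trivial action. Then the `G`-set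
`((G × Σₙ)/Γ × Aⁿ)/Σₙ` (with `Σₙ` acting via the `{e} × Σₙ` factor on the
coset space and by permuting coordinates on `Aⁿ`) is `G`-equivariantly
isomorphic to `G ×_H Aⁿ` (where `H` acts on `Aⁿ` through `φ` by permuting
coordinates); in particular, for `A = *` it is isomorphic to `G/H`.
-/

/-- The diagonal `Σₙ`-orbit relation on `(G × Σₙ)/Γ_φ × Aⁿ`. -/
def lhsRel (G : Type*) [Group G] (n : ℕ) (H : Subgroup G)
    (φ : H →* Equiv.Perm (Fin n)) (A : Type*) :
    (((G × Equiv.Perm (Fin n)) ⧸ (H.subtype.prod φ).range) × (Fin n → A)) →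
    (((G × Equiv.Perm (Fin n)) ⧸ (H.subtype.prod φ).range) × (Fin n → A)) → Prop :=
  fun p q => ∃ s : Equiv.Perm (Fin n),
    q.1 = ((1, s) : G × Equiv.Perm (Fin n)) • p.1 ∧ q.2 = fun i => p.2 (s⁻¹ i)

/-- The balanced-product relation defining `G ×_H Aⁿ`. -/
def rhsRel (G : Type*) [Group G] (n : ℕ) (H : Subgroup G)
    (φ : H →* Equiv.Perm (Fin n)) (A : Type*) :
    (G × (Fin n → A)) → (G × (Fin n → A)) → Prop :=
  fun p q => ∃ h : H, p.1 = q.1 * h ∧ q.2 = fun i => p.2 ((φ h)⁻¹ i)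

section Aux
variable (G : Type*) [Group G] (n : ℕ) (H : Subgroup G)
    (φ : H →* Equiv.Perm (Fin n)) (A : Type*)

/-- Inner map: from a representative in `G × Σₙ` and `a : Aⁿ` to the balanced product. -/
def innerMap (x : G × Equiv.Perm (Fin n)) (a : Fin n → A) : Quot (rhsRel G n H φ A) :=
  Quot.mk _ (x.1, fun i => a (x.2 i))

lemma innerMap_coset (x : G × Equiv.Perm (Fin n)) (h : H) (a : Fin n → A) :
    innerMap G n H φ A (x * (H.subtype.prod φ) h) a = innerMap G n H φ A x a := by
  apply Quot.sound
  refine ⟨h, rfl, ?_⟩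
  funext i
  simp [innerMap]

/-- Forward map on the quotient by the graph subgroup. -/
def fwdAux (q : (G × Equiv.Perm (Fin n)) ⧸ (H.subtype.prod φ).range)
    (a : Fin n → A) : Quot (rhsRel G n H φ A) :=
  Quotient.liftOn' q (fun x => innerMap G n H φ A x a) (by
    intro x y hxy
    rw [QuotientGroup.leftRel_apply] at hxy
    obtain ⟨h, hh⟩ := hxy
    have hy : y = x * (H.subtype.prod φ) h := by
      rw [hh]; group
    subst hy
    exact (innerMap_coset G n H φ A x h a).symm)

lemma fwdAux_mk (x : G × Equiv.Perm (Fin n)) (a : Fin n → A) :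
    fwdAux G n H φ A (QuotientGroup.mk x) a = Quot.mk _ (x.1, fun i => a (x.2 i)) := rfl

/-- Forward map `Quot lhsRel → Quot rhsRel`. -/
def fwd : Quot (lhsRel G n H φ A) → Quot (rhsRel G n H φ A) :=
  Quot.lift (fun p => fwdAux G n H φ A p.1 p.2) (by
    rintro ⟨q1, a⟩ ⟨q2, b⟩ ⟨s, hq, hb⟩
    dsimp at hq hb ⊢
    subst hq hb
    induction q1 using QuotientGroup.induction_on with
    | H x =>
      have : ((1, s) : G × Equiv.Perm (Fin n)) • (QuotientGroup.mk x :
          (G × Equiv.Perm (Fin n)) ⧸ (H.subtype.prod φ).range)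
          = QuotientGroup.mk ((1, s) * x) := rfl
      rw [this, fwdAux_mk, fwdAux_mk]
      congr 1
      simp)

/-- Backward map. -/
def bwd : Quot (rhsRel G n H φ A) → Quot (lhsRel G n H φ A) :=
  Quot.lift (fun p => Quot.mk _ (QuotientGroup.mk (p.1, 1), p.2)) (by
    rintro ⟨x, b⟩ ⟨y, c⟩ ⟨h, hx, hc⟩
    dsimp at hx hc ⊢
    subst hx hc
    have hcoset : (QuotientGroup.mk ((y * h, 1) : G × Equiv.Perm (Fin n)) :
        (G × Equiv.Perm (Fin n)) ⧸ (H.subtype.prod φ).range)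
        = QuotientGroup.mk (y, (φ h)⁻¹) := by
      apply QuotientGroup.eq.mpr
      exact ⟨h⁻¹, by simp [Prod.ext_iff, mul_assoc]⟩
    apply Quot.sound
    refine ⟨φ h, ?_, ?_⟩
    · rw [hcoset]
      show _ = QuotientGroup.mk ((1, φ h) * (y, (φ h)⁻¹))
      congr 1
      simp [Prod.ext_iff]
    · funext i; simp)

lemma fwd_bwd (p : Quot (rhsRel G n H φ A)) : fwd G n H φ A (bwd G n H φ A p) = p := by
  induction p using Quot.ind with
  | mk p =>
    show fwdAux G n H φ A (QuotientGroup.mk (p.1, 1)) p.2 = _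
    rw [fwdAux_mk]
    simp

lemma bwd_fwd (p : Quot (lhsRel G n H φ A)) : bwd G n H φ A (fwd G n H φ A p) = p := by
  induction p using Quot.ind with
  | mk p =>
    obtain ⟨q, a⟩ := p
    induction q using QuotientGroup.induction_on with
    | H x =>
      show bwd G n H φ A (Quot.mk _ (x.1, fun i => a (x.2 i))) = _
      show Quot.mk _ (QuotientGroup.mk (x.1, 1), fun i => a (x.2 i)) = _
      apply Quot.sound
      refine ⟨x.2, ?_, ?_⟩
      · show QuotientGroup.mk x = QuotientGroup.mk ((1, x.2) * (x.1, 1))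
        congr 1
        simp [Prod.ext_iff]
      · funext i; simp

/-- Left `G`-translation on the balanced product. -/
def trG (g : G) : Quot (rhsRel G n H φ A) → Quot (rhsRel G n H φ A) :=
  Quot.lift (fun p => Quot.mk _ (g * p.1, p.2)) (by
    rintro ⟨x, b⟩ ⟨y, c⟩ ⟨h, hx, hc⟩
    dsimp at hx hc
    apply Quot.sound
    exact ⟨h, by simp [hx, mul_assoc], hc⟩)

/-- Projection `Quot rhsRel → G ⧸ H` for `A = PUnit`. -/
def proj : Quot (rhsRel G n H φ PUnit) → G ⧸ H :=
  Quot.lift (fun p => QuotientGroup.mk p.1) (by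
    rintro ⟨x, b⟩ ⟨y, c⟩ ⟨h, hx, hc⟩
    dsimp at hx ⊢
    rw [hx]
    apply QuotientGroup.eq.mpr
    simpa using h.2)

/-- Section `G ⧸ H → Quot rhsRel` for `A = PUnit`. -/
def sec : G ⧸ H → Quot (rhsRel G n H φ PUnit) :=
  Quotient.lift (fun g => Quot.mk _ (g, fun _ => PUnit.unit)) (by
    intro x y hxy
    have hh : x⁻¹ * y ∈ H := QuotientGroup.leftRel_apply.mp hxy
    apply Quot.sound
    refine ⟨⟨y⁻¹ * x, ?_⟩, by simp, funext fun i => rfl⟩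
    · have := H.inv_mem hh
      simpa using this)

end Aux

/-- The main equivalence as an `Equiv`. -/
def mainEquiv (G : Type*) [Group G] (n : ℕ) (H : Subgroup G)
    (φ : H →* Equiv.Perm (Fin n)) (A : Type*) :
    Quot (lhsRel G n H φ A) ≃ Quot (rhsRel G n H φ A) :=
  ⟨fwd G n H φ A, bwd G n H φ A, bwd_fwd G n H φ A, fwd_bwd G n H φ A⟩

/-- The point-case equivalence `Quot rhsRel ≃ G ⧸ H`. -/
def ptEquiv (G : Type*) [Group G] (n : ℕ) (H : Subgroup G)
    (φ : H →* Equiv.Perm (Fin n)) :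
    Quot (rhsRel G n H φ PUnit) ≃ G ⧸ H where
  toFun := proj G n H φ
  invFun := sec G n H φ
  left_inv p := by
    induction p using Quot.ind with
    | mk p => rfl
  right_inv q := by
    induction q using QuotientGroup.induction_on with
    | H g => rfl

theorem stmt11 (G : Type*) [Group G] (n : ℕ) (H : Subgroup G)
    (φ : H →* Equiv.Perm (Fin n)) (A : Type*) :
    (∃ e : Quot (lhsRel G n H φ A) ≃ Quot (rhsRel G n H φ A),
      ∀ (g : G) (xq : (G × Equiv.Perm (Fin n)) ⧸ (H.subtype.prod φ).range)
        (a : Fin n → A) (g' : G) (a' : Fin n → A),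
        e (Quot.mk _ (xq, a)) = Quot.mk _ (g', a') →
        e (Quot.mk _ (((g, 1) : G × Equiv.Perm (Fin n)) • xq, a)) =
          Quot.mk _ (g * g', a')) ∧
    (∃ e' : Quot (lhsRel G n H φ PUnit) ≃ G ⧸ H,
      ∀ (g : G) (xq : (G × Equiv.Perm (Fin n)) ⧸ (H.subtype.prod φ).range)
        (a : Fin n → PUnit) (g' : G),
        e' (Quot.mk _ (xq, a)) = QuotientGroup.mk g' →
        e' (Quot.mk _ (((g, 1) : G × Equiv.Perm (Fin n)) • xq, a)) =
          QuotientGroup.mk (g * g')) := by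
  constructor
  · refine ⟨mainEquiv G n H φ A, ?_⟩
    intro g xq a g' a' hyp
    induction xq using QuotientGroup.induction_on with
    | H x =>
      have h2 : Quot.mk (rhsRel G n H φ A) (x.1, fun i => a (x.2 i))
          = Quot.mk _ (g', a') := hyp
      have h3 := congrArg (trG G n H φ A g) h2
      exact h3
  · refine ⟨(mainEquiv G n H φ PUnit).trans (ptEquiv G n H φ), ?_⟩
    intro g xq a g' hyp
    induction xq using QuotientGroup.induction_on with
    | H x =>
      have h2 : (QuotientGroup.mk x.1 : G ⧸ H) = QuotientGroup.mk g' := hyp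
      have hm : x.1⁻¹ * g' ∈ H := QuotientGroup.eq.mp h2
      show (QuotientGroup.mk (g * x.1) : G ⧸ H) = QuotientGroup.mk (g * g')
      exact QuotientGroup.eq.mpr (by simpa [mul_assoc] using hm)
end

section
/- Let f : A → B be an injective map of sets and n ≥ 1. The n-fold 'pushout-product' of f, i.e. the inclusion ⋃_{i=1}^n B^{i-1} × A × B^{n-i} ↪ Bⁿ, has the following fixed-point property: if a group H acts on B leaving A invariant (f is the inclusion) and α : H → Σₙ is a homomorphism, and H acts on Bⁿ by h·(b₁,…,bₙ) = (h·b_{α(h)⁻¹(1)},…,h·b_{α(h)⁻¹(n)}) where α is the permutation action of H on cosets H/K for a subgroup K of index n, then the H-fixed points of ⋃_i B^{i-1} × A × B^{n-i} are in bijection with A^K, compatibly with the bijection (Bⁿ)^H ≅ B^K. -/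
/-!
STATEMENT 16: Let `K ≤ H` be of index `n`, `e : H ⧸ K ≃ Fin n` with the
trivial coset first, `r` coset representatives (`r 0 = 1`), and
`α : H →* Σₙ` the coset permutation representation. Let `B` be an `H`-set,
`A ⊆ B` an `H`-invariant subset, and equip `Bⁿ` with the twisted action
`h·(b) i = h • b (α(h)⁻¹ i)`. Then the bijection `B^K ≅ (Bⁿ)^H`,
`x ↦ (i ↦ r i • x)`, restricts to a bijection
`A^K ≅ (⋃ᵢ B^{i-1} × A × B^{n-i})^H`.
-/

theorem stmt16 {H B : Type*} [Group H] [MulAction H B] (K : Subgroup H)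
    {n : ℕ} (hn : 0 < n) (e : (H ⧸ K) ≃ Fin n)
    (he1 : e (QuotientGroup.mk (1 : H)) = ⟨0, hn⟩)
    (r : Fin n → H) (hr : ∀ i, (QuotientGroup.mk (r i) : H ⧸ K) = e.symm i)
    (hr0 : r ⟨0, hn⟩ = 1)
    (α : H →* Equiv.Perm (Fin n))
    (hα : ∀ (h : H) (i : Fin n), (e.symm (α h i) : H ⧸ K) = h • (e.symm i : H ⧸ K))
    (A : Set B) (hA : ∀ (h : H), ∀ a ∈ A, h • a ∈ A) :
    Set.BijOn (fun (x : B) (i : Fin n) => r i • x)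
      {x : B | x ∈ A ∧ ∀ k : K, (k : H) • x = x}
      {f : Fin n → B | (∃ i : Fin n, f i ∈ A) ∧
        ∀ (h : H) (i : Fin n), h • f ((α h)⁻¹ i) = f i} := by
  have e0 : (e.symm ⟨0, hn⟩ : H ⧸ K) = QuotientGroup.mk (1 : H) := by
    rw [← he1, Equiv.symm_apply_apply]
  -- for K-fixed x, the action factors through cosets
  have key : ∀ x : B, (∀ k : K, (k : H) • x = x) → ∀ g g' : H,
      (QuotientGroup.mk g : H ⧸ K) = QuotientGroup.mk g' → g • x = g' • x := by
    intro x hx g g' hgg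
    rw [QuotientGroup.eq] at hgg
    have h1 := hx ⟨g⁻¹ * g', hgg⟩
    calc g • x = g • (g⁻¹ * g') • x := by rw [h1]
      _ = (g * (g⁻¹ * g')) • x := (mul_smul _ _ _).symm
      _ = g' • x := by rw [mul_inv_cancel_left]
  constructor
  · -- MapsTo
    intro x hx
    obtain ⟨hxA, hxK⟩ := hx
    refine ⟨⟨⟨0, hn⟩, by simpa [hr0] using hxA⟩, ?_⟩
    intro h i
    simp only
    rw [← mul_smul]
    apply key x hxK
    rw [← smul_eq_mul, ← MulAction.Quotient.smul_mk, hr, ← hα, Equiv.Perm.coe_inv, Equiv.apply_symm_apply, hr]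
  constructor
  · -- InjOn
    intro x hx y hy hxy
    have := congrFun hxy ⟨0, hn⟩
    simpa [hr0] using this
  · -- SurjOn
    intro f hf
    obtain ⟨⟨i0, hi0⟩, heq⟩ := hf
    set x := f ⟨0, hn⟩ with hx
    have hαr : ∀ i, α (r i) ⟨0, hn⟩ = i := by
      intro i
      apply e.symm.injective
      rw [hα, e0, MulAction.Quotient.smul_mk, smul_eq_mul, mul_one, hr]
    have hfi : ∀ i, f i = r i • x := by
      intro i
      have h2 : (α (r i))⁻¹ i = ⟨0, hn⟩ := by
        rw [Equiv.Perm.inv_eq_iff_eq, hαr]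
      have := heq (r i) i
      rw [h2] at this
      exact this.symm
    have hxfix : ∀ k : K, (k : H) • x = x := by
      intro k
      have hα0 : α (k : H) ⟨0, hn⟩ = ⟨0, hn⟩ := by
        apply e.symm.injective
        rw [hα, e0, MulAction.Quotient.smul_mk, smul_eq_mul, mul_one]
        rw [eq_comm, QuotientGroup.eq]
        simp [k.2]
      have h2 : (α (k : H))⁻¹ ⟨0, hn⟩ = ⟨0, hn⟩ := by
        conv_lhs => rw [← hα0, Equiv.Perm.coe_inv, Equiv.symm_apply_apply]
      have := heq (k : H) ⟨0, hn⟩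
      rw [h2] at this
      exact this
    have hxA : x ∈ A := by
      have : (r i0)⁻¹ • f i0 ∈ A := hA _ _ hi0
      rwa [hfi i0, inv_smul_smul] at this
    exact ⟨x, ⟨hxA, hxfix⟩, by ext i; exact (hfi i).symm⟩
end
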